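/- arXiv:1312.2731 — 3 statements merged into one kernel-verified Lean document; each statement's English description precedes it below -/
import Mathlib

section
/- Let A = [[d₁, b], [c, d₂]] be a 2×2 nonnegative real matrix with singular values σ₁ ≥ σ₂ ≥ 0 and b·c ≤ d₁·d₂. Then σ₁ + σ₂ ≥ d₁ + d₂ and σ₁ - σ₂ ≥ |d₁ - d₂|. -/
/-!
Adding or subtracting twice `σ₁ σ₂ = d₁ d₂ - b c` to `σ₁² + σ₂² = d₁² + d₂² + b² + c²` gives
`(σ₁ + σ₂)² = (d₁ + d₂)² + (b - c)²` and `(σ₁ - σ₂)² = (d₁ - d₂)² + (b + c)²`.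
Since `σ₁ ± σ₂ ≥ 0`, each side dominates the absolute value of the first square on the right.
-/

section SingularValueIdentities

variable {R : Type*} [CommRing R] {b c d₁ d₂ σ₁ σ₂ : R}

theorem sq_add_eq_sq_add_add_sq_sub
    (hsum : σ₁ ^ 2 + σ₂ ^ 2 = d₁ ^ 2 + d₂ ^ 2 + b ^ 2 + c ^ 2)
    (hprod : σ₁ * σ₂ = d₁ * d₂ - b * c) :
    (σ₁ + σ₂) ^ 2 = (d₁ + d₂) ^ 2 + (b - c) ^ 2 := by
  linear_combination hsum + 2 * hprod

theorem sq_sub_eq_sq_sub_add_sq_add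
    (hsum : σ₁ ^ 2 + σ₂ ^ 2 = d₁ ^ 2 + d₂ ^ 2 + b ^ 2 + c ^ 2)
    (hprod : σ₁ * σ₂ = d₁ * d₂ - b * c) :
    (σ₁ - σ₂) ^ 2 = (d₁ - d₂) ^ 2 + (b + c) ^ 2 := by
  linear_combination hsum - 2 * hprod

end SingularValueIdentities

theorem abs_le_of_sq_eq_sq_add_sq {R : Type*} [CommRing R] [LinearOrder R] [IsStrictOrderedRing R]
    {x y z : R} (hx : 0 ≤ x) (h : x ^ 2 = y ^ 2 + z ^ 2) : |y| ≤ x :=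
  abs_le_of_sq_le_sq (h ▸ le_add_of_nonneg_right (sq_nonneg z)) hx

theorem stmt_2_general (b c d₁ d₂ σ₁ σ₂ : ℝ)
    (hσ : σ₁ ≥ σ₂) (hσ2 : σ₂ ≥ 0)
    (hsum : σ₁ ^ 2 + σ₂ ^ 2 = d₁ ^ 2 + d₂ ^ 2 + b ^ 2 + c ^ 2)
    (hprod : σ₁ * σ₂ = d₁ * d₂ - b * c) :
    σ₁ + σ₂ ≥ d₁ + d₂ ∧ σ₁ - σ₂ ≥ |d₁ - d₂| :=
  ⟨(le_abs_self _).trans <| abs_le_of_sq_eq_sq_add_sq (by linarith)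
      (sq_add_eq_sq_add_add_sq_sub hsum hprod),
    abs_le_of_sq_eq_sq_add_sq (sub_nonneg.mpr hσ) (sq_sub_eq_sq_sub_add_sq_add hsum hprod)⟩

theorem stmt_2 (b c d₁ d₂ σ₁ σ₂ : ℝ)
    (hb : 0 ≤ b) (hc : 0 ≤ c) (hd1 : 0 ≤ d₁) (hd2 : 0 ≤ d₂)
    (hσ : σ₁ ≥ σ₂) (hσ2 : σ₂ ≥ 0)
    (hbc : b * c ≤ d₁ * d₂)
    (hsum : σ₁ ^ 2 + σ₂ ^ 2 = d₁ ^ 2 + d₂ ^ 2 + b ^ 2 + c ^ 2)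
    (hprod : σ₁ * σ₂ = d₁ * d₂ - b * c) :
    σ₁ + σ₂ ≥ d₁ + d₂ ∧ σ₁ - σ₂ ≥ |d₁ - d₂| :=
  stmt_2_general b c d₁ d₂ σ₁ σ₂ hσ hσ2 hsum hprod
end

section
/- Let A, B be m×n real matrices with singular values ρ₁ ≥ … ≥ ρₙ and σ₁ ≥ … ≥ σₙ respectively. Then trace(Aᵀ B) ≤ Σᵢ ρᵢσᵢ (von Neumann trace inequality). -/
/-!
Write `A = U Σ_ρ Vᵀ` and `B = P Σ_σ Qᵀ`. By cyclicity of the trace,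
`trace (Aᵀ B) = ∑ᵢ ∑ⱼ ρᵢ σⱼ Mᵢⱼ Nⱼᵢ` where `M = Jᵀ (Uᵀ P) J` and `N = Qᵀ V`, with `J` the
rectangular identity; `M`, `N` and their transposes are contractions. By AM-GM,
`Mᵢⱼ Nⱼᵢ ≤ Dᵢⱼ := (Mᵢⱼ² + Nⱼᵢ²) / 2`, and `D` is doubly substochastic since the columns of a
contraction have norm at most one. For such `D` and decreasing nonnegative `ρ`, `σ`, one has
`∑ᵢⱼ ρᵢ σⱼ Dᵢⱼ ≤ ∑ᵢ ρᵢ σᵢ`: by Abel summation in `σ` it suffices to compare prefix sums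
over `j ≤ l`, and there the weights `tᵢ = ∑_{j ≤ l} Dᵢⱼ` lie in `[0, 1]` with total mass at most
`l + 1`, so `∑ᵢ ρᵢ tᵢ` is largest when the mass sits on the `l + 1` largest `ρᵢ`.
-/

open Matrix

/-- The m×n rectangular diagonal matrix with diagonal entries `σ`. -/
def diagRect {m n : ℕ} (σ : Fin n → ℝ) : Matrix (Fin m) (Fin n) ℝ :=
  Matrix.of fun i j => if (i : ℕ) = (j : ℕ) then σ j else 0

open Finset

theorem sum_mul_le_sum_of_sum_le_card {ι : Type*} [Fintype ι] [DecidableEq ι] {s : Finset ι}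
    {ρ t : ι → ℝ} {c : ℝ} (hc : 0 ≤ c) (hs : ∀ i ∈ s, c ≤ ρ i) (hsc : ∀ i ∉ s, ρ i ≤ c)
    (ht0 : ∀ i, 0 ≤ t i) (ht1 : ∀ i, t i ≤ 1) (ht : ∑ i, t i ≤ #s) :
    ∑ i, ρ i * t i ≤ ∑ i ∈ s, ρ i := by
  have hpoint : ∀ i, ρ i * t i ≤ c * t i + if i ∈ s then ρ i - c else 0 := by
    intro i
    split_ifs with hi
    · nlinarith [hs i hi, ht1 i]
    · nlinarith [hsc i hi, ht0 i]
  calc ∑ i, ρ i * t i ≤ ∑ i, (c * t i + if i ∈ s then ρ i - c else 0) :=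
        sum_le_sum fun i _ => hpoint i
    _ = c * ∑ i, t i + ∑ i ∈ s, (ρ i - c) := by
      rw [sum_add_distrib, ← mul_sum, sum_ite_mem, univ_inter]
    _ ≤ ∑ i ∈ s, ρ i := by
      rw [sum_sub_distrib, sum_const, nsmul_eq_mul]
      nlinarith

theorem Antitone.mul_sum_le_sum_mul {n : ℕ} {σ d : Fin n → ℝ} (hσ : Antitone σ)
    (hd : ∀ l, 0 ≤ ∑ j ∈ Iic l, d j) {x : ℝ} (hx : ∀ i, x ≤ σ i) :
    x * ∑ j, d j ≤ ∑ j, σ j * d j := by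
  induction n generalizing x with
  | zero => simp
  | succ n ih =>
    have hd' : ∀ l, 0 ≤ ∑ j ∈ Iic l, d (Fin.castSucc j) := fun l => by
      simpa [← Fin.map_castSuccEmb_Iic, sum_map] using hd l.castSucc
    have htotal : 0 ≤ ∑ j, d j := by simpa [← Fin.top_eq_last, Iic_top] using hd (Fin.last n)
    calc x * ∑ j, d j ≤ σ (Fin.last n) * ∑ j, d j := mul_le_mul_of_nonneg_right (hx _) htotal
      _ = σ (Fin.last n) * ∑ j : Fin n, d j.castSucc + σ (Fin.last n) * d (Fin.last n) := by
        rw [Fin.sum_univ_castSucc, mul_add]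
      _ ≤ ∑ j : Fin n, σ j.castSucc * d j.castSucc + σ (Fin.last n) * d (Fin.last n) := by
        gcongr
        exact ih (hσ.comp_monotone fun _ _ h => h) hd' fun i => hσ (Fin.castSucc_lt_last i).le
      _ = ∑ j, σ j * d j := (Fin.sum_univ_castSucc fun j => σ j * d j).symm

theorem Antitone.sum_mul_le_sum_mul_of_sum_Iic_le {n : ℕ} {σ c r : Fin n → ℝ}
    (hσ : Antitone σ) (hσ0 : ∀ i, 0 ≤ σ i) (h : ∀ l, ∑ j ∈ Iic l, c j ≤ ∑ j ∈ Iic l, r j) :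
    ∑ j, σ j * c j ≤ ∑ j, σ j * r j := by
  have := hσ.mul_sum_le_sum_mul (d := r - c) (fun l => by simpa [sum_sub_distrib] using h l) hσ0
  simpa [mul_sub, sum_sub_distrib] using this

theorem sum_sum_mul_mul_le_of_doublySubstochastic {n : ℕ} {ρ σ : Fin n → ℝ}
    (hρ : Antitone ρ) (hσ : Antitone σ) (hρ0 : ∀ i, 0 ≤ ρ i) (hσ0 : ∀ i, 0 ≤ σ i)
    {D : Matrix (Fin n) (Fin n) ℝ} (hD0 : ∀ i j, 0 ≤ D i j) (hrow : ∀ i, ∑ j, D i j ≤ 1)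
    (hcol : ∀ j, ∑ i, D i j ≤ 1) :
    ∑ i, ∑ j, ρ i * σ j * D i j ≤ ∑ i, ρ i * σ i := by
  have hprefix : ∀ l, ∑ j ∈ Iic l, ∑ i, ρ i * D i j ≤ ∑ j ∈ Iic l, ρ j := by
    intro l
    rw [sum_comm]
    simp_rw [← mul_sum]
    refine sum_mul_le_sum_of_sum_le_card (hρ0 l) (fun i hi => hρ (mem_Iic.mp hi))
      (fun i hi => hρ (not_le.mp (mt mem_Iic.mpr hi)).le)
      (fun i => sum_nonneg fun j _ => hD0 i j)
      (fun i => (sum_le_sum_of_subset_of_nonneg (subset_univ _) fun j _ _ => hD0 i j).trans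
        (hrow i)) ?_
    calc ∑ i, ∑ j ∈ Iic l, D i j = ∑ j ∈ Iic l, ∑ i, D i j := sum_comm
      _ ≤ #(Iic l) := by simpa using sum_le_sum fun j (_ : j ∈ Iic l) => hcol j
  calc ∑ i, ∑ j, ρ i * σ j * D i j = ∑ j, σ j * ∑ i, ρ i * D i j := by
        rw [sum_comm]; simp_rw [mul_sum]; congr! 2; ring
    _ ≤ ∑ j, σ j * ρ j := hσ.sum_mul_le_sum_mul_of_sum_Iic_le hσ0 hprefix
    _ = ∑ i, ρ i * σ i := by simp_rw [mul_comm]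

namespace Matrix

variable {l m n : Type*} [Fintype l] [Fintype m] [Fintype n]

def IsContraction (M : Matrix m n ℝ) : Prop :=
  ∀ x, M *ᵥ x ⬝ᵥ M *ᵥ x ≤ x ⬝ᵥ x

theorem IsContraction.mul {M : Matrix l m ℝ} {N : Matrix m n ℝ} (hM : M.IsContraction)
    (hN : N.IsContraction) : (M * N).IsContraction := fun x => by
  rw [← mulVec_mulVec]
  exact (hM _).trans (hN x)

theorem isContraction_of_transpose_mul_self [DecidableEq n] {M : Matrix m n ℝ}
    (h : Mᵀ * M = 1) : M.IsContraction := fun x => by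
  rw [dotProduct_comm, dotProduct_mulVec, ← mulVec_transpose, mulVec_mulVec, h, one_mulVec]

theorem isContraction_transpose_mul [DecidableEq m] {U P : Matrix m m ℝ} (hU : Uᵀ * U = 1)
    (hP : Pᵀ * P = 1) : (Uᵀ * P).IsContraction := by
  refine isContraction_of_transpose_mul_self ?_
  rw [transpose_mul, transpose_transpose, Matrix.mul_assoc, ← Matrix.mul_assoc U,
    mul_eq_one_comm.mp hU, Matrix.one_mul, hP]

theorem IsContraction.sum_sq_apply_le_one [DecidableEq n] {M : Matrix m n ℝ}
    (hM : M.IsContraction) (j : n) : ∑ i, M i j ^ 2 ≤ 1 := by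
  simpa [mulVec_single_one, dotProduct, sq, Pi.single_apply] using hM (Pi.single j 1)

theorem trace_diagonal_mul_diagonal_mul [DecidableEq n] (ρ σ : n → ℝ) (M N : Matrix n n ℝ) :
    trace (diagonal ρ * M * diagonal σ * N) = ∑ i, ∑ j, ρ i * σ j * (M i j * N j i) := by
  refine sum_congr rfl fun i _ => ?_
  rw [diag_apply, mul_apply]
  refine sum_congr rfl fun j _ => ?_
  rw [mul_diagonal, diagonal_mul]
  ring

end Matrix

theorem trace_diagonal_mul_diagonal_mul_le_of_isContraction {n : ℕ} {ρ σ : Fin n → ℝ}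
    (hρ : Antitone ρ) (hσ : Antitone σ) (hρ0 : ∀ i, 0 ≤ ρ i) (hσ0 : ∀ i, 0 ≤ σ i)
    {M N : Matrix (Fin n) (Fin n) ℝ} (hM : M.IsContraction) (hMt : Mᵀ.IsContraction)
    (hN : N.IsContraction) (hNt : Nᵀ.IsContraction) :
    trace (diagonal ρ * M * diagonal σ * N) ≤ ∑ i, ρ i * σ i := by
  let D : Matrix (Fin n) (Fin n) ℝ := of fun i j => (M i j ^ 2 + N j i ^ 2) / 2
  have hrow : ∀ i, ∑ j, D i j ≤ 1 := fun i => by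
    have hMi := hMt.sum_sq_apply_le_one i
    have hNi := hN.sum_sq_apply_le_one i
    simp only [transpose_apply] at hMi
    simp only [D, of_apply, ← sum_div, sum_add_distrib]
    linarith
  have hcol : ∀ j, ∑ i, D i j ≤ 1 := fun j => by
    have hMj := hM.sum_sq_apply_le_one j
    have hNj := hNt.sum_sq_apply_le_one j
    simp only [transpose_apply] at hNj
    simp only [D, of_apply, ← sum_div, sum_add_distrib]
    linarith
  rw [trace_diagonal_mul_diagonal_mul]
  calc ∑ i, ∑ j, ρ i * σ j * (M i j * N j i) ≤ ∑ i, ∑ j, ρ i * σ j * D i j := by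
        gcongr with i _ j _
        · exact mul_nonneg (hρ0 i) (hσ0 j)
        · simp only [D, of_apply]
          nlinarith [sq_nonneg (M i j - N j i)]
    _ ≤ ∑ i, ρ i * σ i := sum_sum_mul_mul_le_of_doublySubstochastic hρ hσ hρ0 hσ0
        (fun i j => by simp only [D, of_apply]; positivity) hrow hcol

theorem mulVec_diagRect_one_apply {m n : ℕ} (x : Fin n → ℝ) (k : Fin m) :
    (diagRect (m := m) (fun _ => 1) *ᵥ x) k = if h : (k : ℕ) < n then x ⟨k, h⟩ else 0 := by
  simp only [diagRect, mulVec, dotProduct, of_apply, ite_mul, one_mul, zero_mul]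
  split_ifs with h
  · rw [Fintype.sum_eq_single ⟨k, h⟩ fun j hj => if_neg fun hkj => hj (Fin.ext hkj.symm),
      if_pos rfl]
  · exact sum_eq_zero fun j _ => if_neg fun (hkj : (k : ℕ) = j) => h (hkj ▸ j.isLt)

theorem isContraction_diagRect_one {m n : ℕ} :
    (diagRect (m := m) (fun _ : Fin n => (1 : ℝ))).IsContraction := fun x => by
  set g : ℕ → ℝ := fun k => if h : k < n then x ⟨k, h⟩ ^ 2 else 0
  have hg0 : ∀ k, 0 ≤ g k := fun k => by unfold g; split_ifs <;> positivity
  have hlhs : diagRect (m := m) (fun _ => 1) *ᵥ x ⬝ᵥ diagRect (m := m) (fun _ => 1) *ᵥ x =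
      ∑ k ∈ range m, g k := by
    rw [← Fin.sum_univ_eq_sum_range]
    refine sum_congr rfl fun k _ => ?_
    rw [mulVec_diagRect_one_apply]
    split_ifs <;> simp [g, *, sq]
  have hrhs : x ⬝ᵥ x = ∑ k ∈ range n, g k := by
    rw [← Fin.sum_univ_eq_sum_range]
    exact sum_congr rfl fun k _ => by simp [g, sq]
  rw [hlhs, hrhs]
  calc ∑ k ∈ range m, g k ≤ ∑ k ∈ range (max m n), g k :=
        sum_le_sum_of_subset_of_nonneg (range_subset_range.mpr (le_max_left m n))
          fun k _ _ => hg0 k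
    _ = ∑ k ∈ range n, g k :=
        (sum_subset (range_subset_range.mpr (le_max_right m n))
          fun k _ hk => dif_neg (by simpa using hk)).symm

theorem transpose_diagRect_one {m n : ℕ} :
    (diagRect (m := m) (fun _ : Fin n => (1 : ℝ)))ᵀ = diagRect (fun _ => 1) := by
  ext i j
  simp [diagRect, eq_comm]

theorem diagRect_eq_mul_diagonal {m n : ℕ} (σ : Fin n → ℝ) :
    diagRect (m := m) σ = (diagRect (fun _ => 1) : Matrix (Fin m) (Fin n) ℝ) * diagonal σ := by
  ext i j
  rw [mul_diagonal]
  simp [diagRect]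

/-- von Neumann trace inequality. -/
theorem stmt_7 (m n : ℕ) (A B : Matrix (Fin m) (Fin n) ℝ)
    (ρ σ : Fin n → ℝ) (hρ : Antitone ρ) (hσ : Antitone σ)
    (hρ0 : ∀ i, 0 ≤ ρ i) (hσ0 : ∀ i, 0 ≤ σ i)
    (U P : Matrix (Fin m) (Fin m) ℝ) (V Q : Matrix (Fin n) (Fin n) ℝ)
    (hU : Uᵀ * U = 1) (hV : Vᵀ * V = 1) (hP : Pᵀ * P = 1) (hQ : Qᵀ * Q = 1)
    (hA : A = U * diagRect (m := m) ρ * Vᵀ) (hB : B = P * diagRect (m := m) σ * Qᵀ) :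
    Matrix.trace (Aᵀ * B) ≤ ∑ i, ρ i * σ i := by
  set J : Matrix (Fin m) (Fin n) ℝ := diagRect fun _ => 1
  have hJ : J.IsContraction := isContraction_diagRect_one
  have hJt : Jᵀ.IsContraction := by rw [transpose_diagRect_one]; exact isContraction_diagRect_one
  have htrace : trace (Aᵀ * B) =
      trace (diagonal ρ * (Jᵀ * (Uᵀ * P) * J) * diagonal σ * (Qᵀ * V)) := by
    rw [hA, hB, diagRect_eq_mul_diagonal ρ, diagRect_eq_mul_diagonal σ]
    simp only [transpose_mul, diagonal_transpose, transpose_transpose, Matrix.mul_assoc]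
    rw [trace_mul_comm V]
    simp only [Matrix.mul_assoc]
    rfl
  have hM : (Jᵀ * (Uᵀ * P) * J)ᵀ.IsContraction := by
    rw [transpose_mul, transpose_mul, transpose_mul, transpose_transpose, transpose_transpose]
    exact hJt.mul ((isContraction_transpose_mul hP hU).mul hJ)
  have hN : (Qᵀ * V)ᵀ.IsContraction := by
    rw [transpose_mul, transpose_transpose]
    exact isContraction_transpose_mul hV hQ
  rw [htrace]
  exact trace_diagonal_mul_diagonal_mul_le_of_isContraction hρ hσ hρ0 hσ0
    ((hJt.mul (isContraction_transpose_mul hU hP)).mul hJ) hM (isContraction_transpose_mul hQ hV) hN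
end

section
/- Let A be an m×n real matrix and let M be the set of m×n real matrices with fixed singular values σ₁ ≥ … ≥ σₙ ≥ 0. If X ∈ M minimizes ‖X - A‖_F over M, then AᵀX and XAᵀ are symmetric matrices. -/
open Matrix

/-- The Frobenius norm of a matrix. -/
noncomputable def frob {m n : ℕ} (A : Matrix (Fin m) (Fin n) ℝ) : ℝ :=
  Real.sqrt (∑ i, ∑ j, (A i j) ^ 2)

/-!
Every matrix of `M` has the same Frobenius norm, so minimizing `‖Y - A‖` over `M` amounts to
maximizing `trace (Aᵀ * Y)`. Since `M` is stable under `Y ↦ Y * Q` and `Y ↦ Q * Y` for orthogonal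
`Q`, the identity maximizes `Q ↦ trace (S * Q)` over the orthogonal group, for `S = Aᵀ * X` and
`S = X * Aᵀ`. Differentiating along `t ↦ exp (t • K)` with `K` skew gives `trace (S * K) = 0` for
all skew `K`, which forces `S` to be symmetric.
-/

open NormedSpace

section OrthogonalGroup

variable {n : Type*} [Fintype n] [DecidableEq n]

theorem transpose_exp_mul_exp_of_transpose_eq_neg {K : Matrix n n ℝ} (hK : Kᵀ = -K) :
    (exp K)ᵀ * exp K = 1 := by
  rw [← exp_transpose, hK, ← exp_add_of_commute _ _ (Commute.neg_left (Commute.refl K)),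
    neg_add_cancel, exp_zero]

theorem trace_mul_eq_zero_of_forall_trace_mul_exp_le {S K : Matrix n n ℝ}
    (h : ∀ t : ℝ, trace (S * exp (t • K)) ≤ trace S) : trace (S * K) = 0 := by
  -- Matrices carry no global norm; any normed-algebra structure lets us differentiate `exp`.
  let _ := Matrix.linftyOpNormedRing (n := n) (α := ℝ)
  let _ := Matrix.linftyOpNormedAlgebra (n := n) (R := ℝ) (α := ℝ)
  let L : Matrix n n ℝ →L[ℝ] ℝ :=
    LinearMap.toContinuousLinearMap (traceLinearMap n ℝ ℝ ∘ₗ LinearMap.mulLeft ℝ S)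
  have hderiv : HasDerivAt (fun t : ℝ => trace (S * exp (t • K))) (trace (S * K)) 0 := by
    have := L.hasFDerivAt.comp_hasDerivAt (0 : ℝ) (hasDerivAt_exp_smul_const K 0)
    rwa [zero_smul, exp_zero, one_mul] at this
  refine IsLocalMax.hasDerivAt_eq_zero (Filter.Eventually.of_forall fun t => ?_) hderiv
  simpa using h t

theorem transpose_eq_of_forall_trace_mul_eq_zero {S : Matrix n n ℝ}
    (h : ∀ K : Matrix n n ℝ, Kᵀ = -K → trace (S * K) = 0) : Sᵀ = S := by
  ext i j
  have := h (single j i 1 - single i j 1) (by simp [transpose_sub])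
  simp only [mul_sub, trace_sub, trace_mul_single, MulOpposite.op_one, one_smul] at this
  rw [transpose_apply]
  linarith

theorem transpose_eq_of_forall_trace_mul_orthogonal_le {S : Matrix n n ℝ}
    (h : ∀ Q : Matrix n n ℝ, Qᵀ * Q = 1 → trace (S * Q) ≤ trace S) : Sᵀ = S := by
  refine transpose_eq_of_forall_trace_mul_eq_zero fun K hK =>
    trace_mul_eq_zero_of_forall_trace_mul_exp_le fun t => h _ ?_
  exact transpose_exp_mul_exp_of_transpose_eq_neg (by rw [transpose_smul, hK, smul_neg])

end OrthogonalGroup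

section OrthogonalOrbit

variable {m n : Type*} [Fintype m] [DecidableEq m] [Fintype n] [DecidableEq n]

def orthogonalOrbit (D : Matrix m n ℝ) : Set (Matrix m n ℝ) :=
  {B | ∃ (U : Matrix m m ℝ) (V : Matrix n n ℝ), Uᵀ * U = 1 ∧ Vᵀ * V = 1 ∧ B = U * D * Vᵀ}

variable {D B : Matrix m n ℝ}

theorem mul_orthogonal_mem_orthogonalOrbit (hB : B ∈ orthogonalOrbit D) {Q : Matrix n n ℝ}
    (hQ : Qᵀ * Q = 1) : B * Q ∈ orthogonalOrbit D := by
  obtain ⟨U, V, hU, hV, rfl⟩ := hB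
  refine ⟨U, Qᵀ * V, hU, ?_, by simp [Matrix.mul_assoc]⟩
  rw [transpose_mul, transpose_transpose, Matrix.mul_assoc, ← Matrix.mul_assoc Q,
    mul_eq_one_comm.mp hQ, Matrix.one_mul, hV]

theorem orthogonal_mul_mem_orthogonalOrbit (hB : B ∈ orthogonalOrbit D) {Q : Matrix m m ℝ}
    (hQ : Qᵀ * Q = 1) : Q * B ∈ orthogonalOrbit D := by
  obtain ⟨U, V, hU, hV, rfl⟩ := hB
  refine ⟨Q * U, V, ?_, hV, by simp [Matrix.mul_assoc]⟩
  rw [transpose_mul, Matrix.mul_assoc, ← Matrix.mul_assoc Qᵀ, hQ, Matrix.one_mul, hU]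

theorem trace_transpose_mul_self_of_mem_orthogonalOrbit (hB : B ∈ orthogonalOrbit D) :
    trace (Bᵀ * B) = trace (Dᵀ * D) := by
  obtain ⟨U, V, hU, hV, rfl⟩ := hB
  calc trace ((U * D * Vᵀ)ᵀ * (U * D * Vᵀ)) = trace (V * (Dᵀ * (Uᵀ * U) * D) * Vᵀ) := by
        simp only [transpose_mul, transpose_transpose, Matrix.mul_assoc]
    _ = trace (Dᵀ * D) := by rw [trace_mul_cycle, hV, hU, Matrix.one_mul, Matrix.mul_one]

end OrthogonalOrbit

theorem sq_frob {m n : ℕ} (B : Matrix (Fin m) (Fin n) ℝ) : frob B ^ 2 = trace (Bᵀ * B) := by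
  rw [frob, Real.sq_sqrt (by positivity), trace, Finset.sum_comm]
  simp [mul_apply, sq]

theorem trace_transpose_mul_le_of_frob_sub_le {m n : ℕ} {A X Y : Matrix (Fin m) (Fin n) ℝ}
    (hXY : trace (Xᵀ * X) = trace (Yᵀ * Y)) (h : frob (X - A) ≤ frob (Y - A)) :
    trace (Aᵀ * Y) ≤ trace (Aᵀ * X) := by
  have hsq : frob (X - A) ^ 2 ≤ frob (Y - A) ^ 2 := pow_le_pow_left₀ (Real.sqrt_nonneg _) h 2
  have hcross (B : Matrix (Fin m) (Fin n) ℝ) : trace (Bᵀ * A) = trace (Aᵀ * B) := by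
    rw [← trace_transpose, transpose_mul, transpose_transpose]
  simp only [sq_frob, transpose_sub, Matrix.sub_mul, Matrix.mul_sub, trace_sub, hcross] at hsq
  linarith

theorem stmt_15_general (m n : ℕ) (σ : Fin n → ℝ)
    (A X : Matrix (Fin m) (Fin n) ℝ)
    (M : Set (Matrix (Fin m) (Fin n) ℝ))
    (hM : M = {B | ∃ (U : Matrix (Fin m) (Fin m) ℝ) (V : Matrix (Fin n) (Fin n) ℝ),
        Uᵀ * U = 1 ∧ Vᵀ * V = 1 ∧ B = U * diagRect (m := m) σ * Vᵀ})
    (hX : X ∈ M) (hmin : ∀ Y ∈ M, frob (X - A) ≤ frob (Y - A)) :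
    (Aᵀ * X)ᵀ = Aᵀ * X ∧ (X * Aᵀ)ᵀ = X * Aᵀ := by
  change M = orthogonalOrbit (diagRect σ) at hM
  subst hM
  have hmax : ∀ Y ∈ orthogonalOrbit (diagRect σ), trace (Aᵀ * Y) ≤ trace (Aᵀ * X) :=
    fun Y hY => trace_transpose_mul_le_of_frob_sub_le
      (by rw [trace_transpose_mul_self_of_mem_orthogonalOrbit hX,
        trace_transpose_mul_self_of_mem_orthogonalOrbit hY]) (hmin Y hY)
  constructor
  · refine transpose_eq_of_forall_trace_mul_orthogonal_le fun Q hQ => ?_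
    rw [Matrix.mul_assoc]
    exact hmax _ (mul_orthogonal_mem_orthogonalOrbit hX hQ)
  · refine transpose_eq_of_forall_trace_mul_orthogonal_le fun Q hQ => ?_
    have := hmax _ (orthogonal_mul_mem_orthogonalOrbit hX hQ)
    rwa [trace_mul_comm (X * Aᵀ), ← Matrix.mul_assoc, trace_mul_comm, trace_mul_comm X]

theorem stmt_15 (m n : ℕ) (σ : Fin n → ℝ) (hσ : Antitone σ) (hσ0 : ∀ i, 0 ≤ σ i)
    (A X : Matrix (Fin m) (Fin n) ℝ)
    (M : Set (Matrix (Fin m) (Fin n) ℝ))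
    (hM : M = {B | ∃ (U : Matrix (Fin m) (Fin m) ℝ) (V : Matrix (Fin n) (Fin n) ℝ),
        Uᵀ * U = 1 ∧ Vᵀ * V = 1 ∧ B = U * diagRect (m := m) σ * Vᵀ})
    (hX : X ∈ M) (hmin : ∀ Y ∈ M, frob (X - A) ≤ frob (Y - A)) :
    (Aᵀ * X)ᵀ = Aᵀ * X ∧ (X * Aᵀ)ᵀ = X * Aᵀ :=
  stmt_15_general m n σ A X M hM hX hmin
end
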